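/- arXiv:2505.21286 — 2 statements merged into one kernel-verified Lean document; each statement's English description precedes it below -/
import Mathlib

section
/- Let θ_1 < ⋯ < θ_K be real numbers, q_1,…,q_K ∈ [0,1], p_1,…,p_K ∈ ℝ, and let v : ℝ → ℝ satisfy v(0) = 0 and be strictly increasing on [0,1]. Suppose the menu is incentive compatible and the contract items designed for distinct types are distinct, i.e. (q_k, p_k) ≠ (q_j, p_j) whenever k ≠ j. Then the quality levels satisfy the monotonicity chain 0 ≤ q_1 < q_2 < ⋯ < q_K. -/
/-- Under incentive compatibility with pairwise-distinct contract items,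
the quality levels satisfy the monotonicity chain `0 ≤ q_1 < q_2 < ⋯ < q_K`. -/
theorem pact_stmt5
    (K : ℕ) (hK : 1 ≤ K) (θ q p : ℕ → ℝ) (v : ℝ → ℝ)
    (hθ : ∀ k j, 1 ≤ k → k < j → j ≤ K → θ k < θ j)
    (hq : ∀ k, 1 ≤ k → k ≤ K → q k ∈ Set.Icc (0 : ℝ) 1)
    (hv0 : v 0 = 0)
    (hv : StrictMonoOn v (Set.Icc (0 : ℝ) 1))
    (hIC : ∀ k j, 1 ≤ k → k ≤ K → 1 ≤ j → j ≤ K →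
      θ k * v (q k) - p k ≥ θ k * v (q j) - p j)
    (hdist : ∀ k j, 1 ≤ k → k ≤ K → 1 ≤ j → j ≤ K → k ≠ j →
      (q k, p k) ≠ (q j, p j)) :
    0 ≤ q 1 ∧ ∀ k, 1 ≤ k → k < K → q k < q (k + 1) := by
  constructor
  · exact (hq 1 le_rfl hK).1
  · intro k hk hkK
    have hk1 : 1 ≤ k + 1 := by omega
    have hkK' : k ≤ K := by omega
    have hk1K : k + 1 ≤ K := by omega
    have hqk := hq k hk hkK'
    have hqk1 := hq (k+1) hk1 hk1K
    have hθlt : θ k < θ (k+1) := hθ k (k+1) hk (by omega) hk1K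
    have h1 := hIC k (k+1) hk hkK' hk1 hk1K
    have h2 := hIC (k+1) k hk1 hk1K hk hkK'
    -- h1: θ k * v(q k) - p k ≥ θ k * v(q (k+1)) - p (k+1)
    -- h2: θ (k+1) * v(q (k+1)) - p (k+1) ≥ θ (k+1) * v(q k) - p k
    have hvle : v (q k) ≤ v (q (k+1)) := by
      by_contra hlt
      push_neg at hlt
      nlinarith
    rcases lt_or_eq_of_le hvle with hvlt | hveq
    · by_contra hge
      push_neg at hge
      exact absurd (hv.le_iff_le hqk1 hqk |>.mpr hge) (not_le.mpr hvlt)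
    · have hqeq : q k = q (k+1) := hv.injOn hqk hqk1 hveq
      have hpeq : p k = p (k+1) := by rw [hveq] at h1 h2; linarith
      exact absurd (by rw [hqeq, hpeq]) (hdist k (k+1) hk hkK' hk1 hk1K (by omega))
end

section
/- Let θ_1 < ⋯ < θ_K be real numbers, q_1,…,q_K ∈ [0,1] with q_1 ≤ q_2 ≤ ⋯ ≤ q_K, p_1,…,p_K ∈ ℝ, and let v : ℝ → ℝ satisfy v(0) = 0 and be strictly increasing on [0,1]. If the local downward incentive constraints hold with equality (p_k − p_{k−1} = θ_k·(v(q_k) − v(q_{k−1})) for k = 2,…,K) and the lowest type's individual rationality constraint holds (θ_1·v(q_1) − p_1 ≥ 0), then the menu is feasible: it is fully incentive compatible (θ_k·v(q_k) − p_k ≥ θ_k·v(q_j) − p_j for all k, j) and individually rational (θ_k·v(q_k) − p_k ≥ 0 for all k). -/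
/-- With weakly increasing quality levels, if the local downward
incentive constraints bind and the lowest type's IR constraint holds, then the menu
is feasible: fully incentive compatible and individually rational. -/
theorem pact_stmt13
    (K : ℕ) (hK : 1 ≤ K) (θ q p : ℕ → ℝ) (v : ℝ → ℝ)
    (hθ : ∀ k j, 1 ≤ k → k < j → j ≤ K → θ k < θ j)
    (hq : ∀ k, 1 ≤ k → k ≤ K → q k ∈ Set.Icc (0 : ℝ) 1)
    (hqmono : ∀ k, 1 ≤ k → k < K → q k ≤ q (k + 1))
    (hv0 : v 0 = 0)
    (hv : StrictMonoOn v (Set.Icc (0 : ℝ) 1))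
    (hbind : ∀ k, 2 ≤ k → k ≤ K →
      p k - p (k - 1) = θ k * (v (q k) - v (q (k - 1))))
    (hIR1 : θ 1 * v (q 1) - p 1 ≥ 0) :
    (∀ k j, 1 ≤ k → k ≤ K → 1 ≤ j → j ≤ K →
      θ k * v (q k) - p k ≥ θ k * v (q j) - p j) ∧
    (∀ k, 1 ≤ k → k ≤ K → θ k * v (q k) - p k ≥ 0) := by
  -- q is monotone on [1,K]
  have hqmono' : ∀ j, ∀ k, 1 ≤ k → k ≤ j → j ≤ K → q k ≤ q j := by
    intro j
    induction j with
    | zero => intro k h1 h2 h3; omega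
    | succ n ih =>
      intro k h1 h2 h3
      rcases Nat.eq_or_lt_of_le h2 with h | h
      · rw [h]
      · have hkn : k ≤ n := by omega
        have h1n : 1 ≤ n := by omega
        exact le_trans (ih k h1 hkn (by omega)) (hqmono n h1n (by omega))
  have hvq : ∀ j, ∀ k, 1 ≤ k → k ≤ j → j ≤ K → v (q k) ≤ v (q j) := by
    intro j k h1 h2 h3
    exact hv.monotoneOn (hq k h1 (by omega)) (hq j (by omega) h3)
      (hqmono' j k h1 h2 h3)
  have hvq0 : ∀ k, 1 ≤ k → k ≤ K → 0 ≤ v (q k) := by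
    intro k h1 h2
    have := hv.monotoneOn (Set.mem_Icc.mpr ⟨le_refl 0, zero_le_one⟩)
      (hq k h1 h2) (hq k h1 h2).1
    rwa [hv0] at this
  -- downward IC
  have down : ∀ k, 1 ≤ k → ∀ j, 1 ≤ j → j ≤ k → k ≤ K →
      θ k * v (q k) - p k ≥ θ k * v (q j) - p j := by
    intro k hk
    induction k, hk using Nat.le_induction with
    | base => intro j h1 h2 _; interval_cases j; exact le_refl _
    | succ n h1n ih =>
      intro j hj1 hj2 hnK
      rcases Nat.eq_or_lt_of_le hj2 with h | h
      · rw [h]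
      · have hjn : j ≤ n := by omega
        have hb := hbind (n + 1) (by omega) hnK
        simp only [Nat.add_sub_cancel] at hb
        have ihj := ih j hj1 hjn (by omega)
        -- ihj : θ n * v (q n) - p n ≥ θ n * v (q j) - p j
        have hx : v (q j) - v (q n) ≤ 0 := by
          have := hvq n j hj1 hjn (by omega)
          linarith
        have hθn : θ n < θ (n + 1) := hθ n (n + 1) h1n (by omega) hnK
        have hmul : θ (n + 1) * (v (q j) - v (q n)) ≤ θ n * (v (q j) - v (q n)) :=
          mul_le_mul_of_nonpos_right (le_of_lt hθn) hx
        nlinarith [ihj, hb, hmul]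
  -- upward IC
  have up : ∀ j, 1 ≤ j → ∀ k, 1 ≤ k → k ≤ j → j ≤ K →
      θ k * v (q k) - p k ≥ θ k * v (q j) - p j := by
    intro j hj
    induction j, hj using Nat.le_induction with
    | base => intro k h1 h2 _; interval_cases k; exact le_refl _
    | succ n h1n ih =>
      intro k hk1 hk2 hnK
      rcases Nat.eq_or_lt_of_le hk2 with h | h
      · rw [h]
      · have hkn : k ≤ n := by omega
        have hb := hbind (n + 1) (by omega) hnK
        simp only [Nat.add_sub_cancel] at hb
        have ihk := ih k hk1 hkn (by omega)
        have hx : 0 ≤ v (q (n + 1)) - v (q n) := by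
          have := hvq (n + 1) n h1n (by omega) hnK
          linarith
        have hθn : θ k < θ (n + 1) := hθ k (n + 1) hk1 (by omega) hnK
        have hmul : θ k * (v (q (n + 1)) - v (q n))
            ≤ θ (n + 1) * (v (q (n + 1)) - v (q n)) :=
          mul_le_mul_of_nonneg_right (le_of_lt hθn) hx
        nlinarith [ihk, hb, hmul]
  have IC : ∀ k j, 1 ≤ k → k ≤ K → 1 ≤ j → j ≤ K →
      θ k * v (q k) - p k ≥ θ k * v (q j) - p j := by
    intro k j hk1 hkK hj1 hjK
    rcases le_or_gt j k with h | h
    · exact down k hk1 j hj1 h hkK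
    · exact up j hj1 k hk1 (le_of_lt h) hjK
  refine ⟨IC, ?_⟩
  intro k hk1 hkK
  have h1 := IC k 1 hk1 hkK (le_refl 1) hK
  have hv1 : 0 ≤ v (q 1) := hvq0 1 (le_refl 1) hK
  rcases Nat.eq_or_lt_of_le hk1 with h | h
  · rw [← h]; exact hIR1
  · have hθ1 : θ 1 ≤ θ k := le_of_lt (hθ 1 k (le_refl 1) h hkK)
    nlinarith [h1, hIR1, mul_le_mul_of_nonneg_right hθ1 hv1]
end
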